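/- Let $y_1,\dots,y_p$ be distinct complex numbers and $\mu_1,\dots,\mu_p$ complex numbers with $\sum_j \mu_j \in \mathbb{Z}$ and $\sum_j \mu_j > -p$. Let $a(z) = \prod_{j=1}^p (z-y_j)^{\mu_j}$ (a multivalued function near infinity, whose Laurent expansion at infinity is well-defined since $\sum \mu_j \in \mathbb{Z}$). If the residue at infinity $\mathrm{Res}_\infty\, a(z) z^i\, dz = 0$ for all $i = 0, 1, \dots, p-2$, then $a(z)$ is a polynomial, i.e., all $\mu_j$ are non-negative integers. -/

import Mathlib

/-- The generalized binomial coefficient `μ(μ-1)⋯(μ-m+1)/m!` for `μ : ℂ`. -/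
noncomputable def gbinom (μ : ℂ) (m : ℕ) : ℂ :=
  (∏ i ∈ Finset.range m, (μ - i)) / (m.factorial : ℂ)

/-- The formal binomial power series expansion of `(1 - y/z)^μ` in the variable `X = 1/z`:
its `m`-th coefficient is `(-1)^m C(μ,m) y^m`. -/
noncomputable def binSeries (μ y : ℂ) : PowerSeries ℂ :=
  PowerSeries.mk fun m => (-1) ^ m * gbinom μ m * y ^ m

/-- The residue at infinity of `f(z) dz`, where `f` is given by its formal Laurent
expansion at infinity written as a Laurent series in the variable `X = 1/z`
(so the coefficient of `z^m` in `f` is the coefficient of `X^{-m}`):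
`Res_∞ f dz = -c_{-1}(f)`, i.e. minus the coefficient at `X^1`. -/
noncomputable def resInf (f : LaurentSeries ℂ) : ℂ := - f.coeff 1

/-- The formal Laurent expansion at infinity (in `X = 1/z`) of
`a(z) z^i = z^{S+i} ∏_j (1 - y_j/z)^{μ_j}`, where `S = ∑ μ_j ∈ ℤ`. -/
noncomputable def aExpansion {p : ℕ} (y μ : Fin p → ℂ) (S : ℤ) (i : ℕ) : LaurentSeries ℂ :=
  (HahnSeries.single (-(S + (i : ℤ))) (1 : ℂ)) *
    ((∏ j, binSeries (μ j) (y j) : PowerSeries ℂ) : LaurentSeries ℂ)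

open PowerSeries Finset

lemma coeff_derivativeFun' (f : ℂ⟦X⟧) (n : ℕ) :
    coeff n f.derivativeFun = coeff (n + 1) f * (n + 1) := coeff_derivative f n

lemma derivativeFun_coe' (f : Polynomial ℂ) :
    (f : ℂ⟦X⟧).derivativeFun = (Polynomial.derivative f : ℂ⟦X⟧) := derivative_coe f


lemma gbinom_succ (μ : ℂ) (m : ℕ) : ((m:ℂ)+1) * gbinom μ (m+1) = (μ - m) * gbinom μ m := by
  have h1 : ((m.factorial : ℂ)) ≠ 0 := Nat.cast_ne_zero.2 m.factorial_ne_zero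
  have h2 : ((m:ℂ)+1) ≠ 0 := Nat.cast_add_one_ne_zero m
  unfold gbinom
  rw [Finset.prod_range_succ, Nat.factorial_succ]
  push_cast
  field_simp

lemma binODE0 (y μ : ℂ) :
    ((1:ℂ⟦X⟧) - C y * X) * PowerSeries.derivativeFun (binSeries μ y)
      = C (-(μ*y)) * binSeries μ y := by
  ext n
  rw [sub_mul, one_mul, mul_assoc, map_sub, coeff_C_mul, coeff_C_mul]
  cases n with
  | zero =>
      simp only [coeff_zero_X_mul, mul_zero, sub_zero, coeff_derivativeFun', binSeries, coeff_mk]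
      have := gbinom_succ μ 0
      simp only [Nat.cast_zero, zero_add, one_mul, sub_zero] at this
      simp [this]
      ring
  | succ n =>
      rw [coeff_derivativeFun', coeff_succ_X_mul, coeff_derivativeFun']
      simp only [binSeries, coeff_mk]
      have h1 := gbinom_succ μ (n+1)
      have h2 := gbinom_succ μ n
      push_cast at h1 h2 ⊢
      -- goal: (-1)^(n+2) * gbinom μ (n+2) * y^(n+2) * (n+1+1) - y * ((-1)^(n+1) * gbinom μ (n+1) * y^(n+1) * (n+1)) = -(μ*y) * ((-1)^(n+1)*gbinom μ (n+1) * y^(n+1))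
      rw [pow_succ (-1:ℂ) (n+1), pow_succ y (n+1)]
      linear_combination (-((-1:ℂ)^(n+1) * y^(n+1) * y)) * h1

lemma binODE (y μ : ℂ) :
    ((1:ℂ⟦X⟧) - C y * X) * (X * PowerSeries.derivativeFun (binSeries μ y)
      - C μ * binSeries μ y) = - C μ * binSeries μ y := by
  have h := binODE0 y μ
  rw [map_neg, map_mul] at h
  linear_combination (X : ℂ⟦X⟧) * h

lemma masterODE {p : ℕ} (y μ : Fin p → ℂ) (s : Finset (Fin p)) :
    (∏ j ∈ s, ((1:ℂ⟦X⟧) - C (y j) * X)) *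
      (X * PowerSeries.derivativeFun (∏ j ∈ s, binSeries (μ j) (y j))
        - C (∑ j ∈ s, μ j) * ∏ j ∈ s, binSeries (μ j) (y j))
    = - (∑ j ∈ s, C (μ j) * ∏ k ∈ s.erase j, ((1:ℂ⟦X⟧) - C (y k) * X)) *
        ∏ j ∈ s, binSeries (μ j) (y j) := by
  induction s using Finset.induction_on with
  | empty => simp [PowerSeries.derivativeFun_one]
  | @insert a s ha ih =>
      have hsum : ∑ j ∈ insert a s, C (μ j) * ∏ k ∈ (insert a s).erase j,
            ((1:ℂ⟦X⟧) - C (y k) * X)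
          = C (μ a) * ∏ k ∈ s, ((1:ℂ⟦X⟧) - C (y k) * X)
            + ((1:ℂ⟦X⟧) - C (y a) * X) *
              ∑ j ∈ s, C (μ j) * ∏ k ∈ s.erase j, ((1:ℂ⟦X⟧) - C (y k) * X) := by
        rw [Finset.sum_insert ha, Finset.erase_insert ha, Finset.mul_sum]
        congr 1
        refine Finset.sum_congr rfl fun j hj => ?_
        rw [Finset.erase_insert_of_ne (fun h : a = j => ha (h ▸ hj)),
          Finset.prod_insert (fun h => ha (Finset.mem_of_mem_erase h))]
        ring
      rw [Finset.prod_insert ha, Finset.prod_insert ha, Finset.sum_insert ha, hsum,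
        PowerSeries.derivativeFun_mul, map_add, smul_eq_mul, smul_eq_mul]
      have h1 := binODE (y a) (μ a)
      linear_combination ((∏ j ∈ s, ((1:ℂ⟦X⟧) - C (y j) * X)) *
          (∏ j ∈ s, binSeries (μ j) (y j))) * h1
        + (((1:ℂ⟦X⟧) - C (y a) * X) * binSeries (μ a) (y a)) * ih

lemma natDegree_lin_le (y : ℂ) : (1 - Polynomial.C y * Polynomial.X).natDegree ≤ 1 := by
  have h : (Polynomial.C y * Polynomial.X).natDegree ≤ 1 :=
    (Polynomial.natDegree_C_mul_le _ _).trans (by simp)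
  exact (Polynomial.natDegree_sub_le _ _).trans (max_le (by simp) h)

lemma coe_linprod {p : ℕ} (y : Fin p → ℂ) (s : Finset (Fin p)) :
    ((∏ j ∈ s, (1 - Polynomial.C (y j) * Polynomial.X) : Polynomial ℂ) : ℂ⟦X⟧)
      = ∏ j ∈ s, ((1:ℂ⟦X⟧) - C (y j) * X) := by
  rw [← Polynomial.coeToPowerSeries.ringHom_apply, map_prod]
  refine Finset.prod_congr rfl fun j _ => ?_
  simp [Polynomial.coeToPowerSeries.ringHom_apply]

lemma natDegree_linprod_le {p : ℕ} (y : Fin p → ℂ) (s : Finset (Fin p)) :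
    (∏ j ∈ s, (1 - Polynomial.C (y j) * Polynomial.X)).natDegree ≤ s.card := by
  refine (Polynomial.natDegree_prod_le _ _).trans ?_
  have h := Finset.sum_le_sum (fun j (_ : j ∈ s) => natDegree_lin_le (y j))
  simpa using h

lemma coeff_linprod_eq_zero {p : ℕ} (y : Fin p → ℂ) (s : Finset (Fin p)) (a : ℕ)
    (ha : s.card < a) :
    PowerSeries.coeff a (∏ j ∈ s, ((1:ℂ⟦X⟧) - C (y j) * X)) = 0 := by
  rw [← coe_linprod, Polynomial.coeff_coe]
  exact Polynomial.coeff_eq_zero_of_natDegree_lt (lt_of_le_of_lt (natDegree_linprod_le y s) ha)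

lemma coeff_zero_linprod {p : ℕ} (y : Fin p → ℂ) (s : Finset (Fin p)) :
    PowerSeries.coeff 0 (∏ j ∈ s, ((1:ℂ⟦X⟧) - C (y j) * X)) = 1 := by
  simp [PowerSeries.coeff_zero_eq_constantCoeff_apply, map_prod]

lemma coeff_G (F : ℂ⟦X⟧) (Sc : ℂ) (b : ℕ) :
    PowerSeries.coeff b (X * F.derivativeFun - C Sc * F)
      = ((b:ℂ) - Sc) * PowerSeries.coeff b F := by
  cases b with
  | zero => simp
  | succ m =>
      rw [map_sub, coeff_succ_X_mul, coeff_derivativeFun', coeff_C_mul]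
      push_cast
      ring

lemma coeff_zero_R {p : ℕ} (y μ : Fin p → ℂ) :
    PowerSeries.coeff 0 (∑ j, C (μ j) *
      ∏ k ∈ Finset.univ.erase j, ((1:ℂ⟦X⟧) - C (y k) * X)) = ∑ j, μ j := by
  rw [map_sum]
  exact Finset.sum_congr rfl fun j _ => by
    rw [coeff_C_mul, coeff_zero_linprod]; ring

lemma coeff_R_eq_zero {p : ℕ} (y μ : Fin p → ℂ) (a : ℕ) (hp : 0 < p) (ha : p ≤ a) :
    PowerSeries.coeff a (∑ j, C (μ j) *
      ∏ k ∈ Finset.univ.erase j, ((1:ℂ⟦X⟧) - C (y k) * X)) = 0 := by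
  rw [map_sum]
  refine Finset.sum_eq_zero fun j _ => ?_
  rw [coeff_C_mul, coeff_linprod_eq_zero, mul_zero]
  rw [Finset.card_erase_of_mem (Finset.mem_univ j), Finset.card_univ, Fintype.card_fin]
  omega

lemma stepA {p : ℕ} (hp : 0 < p) (y μ : Fin p → ℂ) (S : ℤ)
    (hS : (∑ j, μ j) = (S : ℂ)) (hSp : -(p:ℤ) < S)
    (hres : ∀ n : ℕ, S < (n:ℤ) → (n:ℤ) < S + p →
      PowerSeries.coeff n (∏ j, binSeries (μ j) (y j)) = 0) :
    ∀ n : ℕ, S < (n:ℤ) → PowerSeries.coeff n (∏ j, binSeries (μ j) (y j)) = 0 := by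
  intro n
  induction n using Nat.strong_induction_on with
  | _ n IH =>
    intro hn
    by_cases hcase : (n:ℤ) < S + p
    · exact hres n hn hcase
    push_neg at hcase
    have master := masterODE y μ (Finset.univ : Finset (Fin p))
    rw [hS] at master
    have key := congrArg (PowerSeries.coeff n) master
    rw [neg_mul, map_neg, PowerSeries.coeff_mul, PowerSeries.coeff_mul] at key
    have hL : ∑ x ∈ Finset.HasAntidiagonal.antidiagonal n,
        PowerSeries.coeff x.1 (∏ j, ((1:ℂ⟦X⟧) - C (y j) * X)) *
          PowerSeries.coeff x.2 ((X : ℂ⟦X⟧) *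
            PowerSeries.derivativeFun (∏ j, binSeries (μ j) (y j)) -
            C ((S:ℂ)) * ∏ j, binSeries (μ j) (y j))
        = ((n:ℂ) - (S:ℂ)) * PowerSeries.coeff n (∏ j, binSeries (μ j) (y j)) := by
      rw [Finset.sum_eq_single_of_mem ((0:ℕ), n) (by simp)]
      · rw [coeff_zero_linprod, coeff_G, one_mul]
      · rintro ⟨a, b⟩ hab hne
        have hab' : a + b = n := Finset.HasAntidiagonal.mem_antidiagonal.1 hab
        have ha0 : a ≠ 0 := by rintro rfl; simp at hab'; exact hne (by simp [hab'])
        rw [coeff_G]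
        rcases lt_or_ge S (b:ℤ) with hb | hb
        · rw [IH b (by omega) hb, mul_zero, mul_zero]
        · have hap : (p:ℤ) ≤ (a:ℤ) := by
            have : (a:ℤ) + (b:ℤ) = (n:ℤ) := by exact_mod_cast hab'
            omega
          rcases lt_or_eq_of_le hap with hap' | hap'
          · rw [coeff_linprod_eq_zero y _ a (by rw [Finset.card_univ, Fintype.card_fin]; exact_mod_cast hap'), zero_mul]
          · have hbS : (b:ℤ) = S := by
              have : (a:ℤ) + (b:ℤ) = (n:ℤ) := by exact_mod_cast hab'
              omega
            have : (b:ℂ) = (S:ℂ) := by exact_mod_cast congrArg (fun t : ℤ => (t:ℂ)) hbS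
            rw [this, sub_self, zero_mul, mul_zero]
    have hR : ∑ x ∈ Finset.HasAntidiagonal.antidiagonal n,
        PowerSeries.coeff x.1 (∑ j, C (μ j) *
          ∏ k ∈ Finset.univ.erase j, ((1:ℂ⟦X⟧) - C (y k) * X)) *
          PowerSeries.coeff x.2 (∏ j, binSeries (μ j) (y j))
        = (S:ℂ) * PowerSeries.coeff n (∏ j, binSeries (μ j) (y j)) := by
      rw [Finset.sum_eq_single_of_mem ((0:ℕ), n) (by simp)]
      · rw [coeff_zero_R, hS]
      · rintro ⟨a, b⟩ hab hne
        have hab' : a + b = n := Finset.HasAntidiagonal.mem_antidiagonal.1 hab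
        have ha0 : a ≠ 0 := by rintro rfl; simp at hab'; exact hne (by simp [hab'])
        rcases lt_or_ge S (b:ℤ) with hb | hb
        · rw [IH b (by omega) hb, mul_zero]
        · have hap : (p:ℤ) ≤ (a:ℤ) := by
            have : (a:ℤ) + (b:ℤ) = (n:ℤ) := by exact_mod_cast hab'
            omega
          rw [coeff_R_eq_zero y μ a hp (by exact_mod_cast hap), zero_mul]
    rw [hL, hR] at key
    have hn0 : (n:ℂ) ≠ 0 := by
      have : 1 ≤ (n:ℤ) := by omega
      exact_mod_cast (by omega : n ≠ 0) |> Nat.cast_ne_zero.2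
    have : (n:ℂ) * PowerSeries.coeff n (∏ j, binSeries (μ j) (y j)) = 0 := by
      linear_combination key
    exact (mul_eq_zero.1 this).resolve_left hn0

open Polynomial in
lemma stepB {p : ℕ} (y μ : Fin p → ℂ) (hy : Function.Injective y) (Sc : ℂ)
    (P : Polynomial ℂ) (hPne : P ≠ 0)
    (hpoly : (∏ k, (1 - Polynomial.C (y k) * Polynomial.X)) *
        (Polynomial.X * Polynomial.derivative P - Polynomial.C Sc * P)
      = (-(∑ k, Polynomial.C (μ k) *
          ∏ l ∈ Finset.univ.erase k, (1 - Polynomial.C (y l) * Polynomial.X))) * P)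
    (j : Fin p) (hyj : y j ≠ 0) :
    μ j = (Polynomial.rootMultiplicity (y j)⁻¹ P : ℕ) := by
  set β := (y j)⁻¹ with hβ
  have hyβ : y j * β = 1 := mul_inv_cancel₀ hyj
  set m := Polynomial.rootMultiplicity β P with hm
  set u := P /ₘ (Polynomial.X - Polynomial.C β) ^ m with hu
  have hu1 : (Polynomial.X - Polynomial.C β) ^ m * u = P :=
    Polynomial.pow_mul_divByMonic_rootMultiplicity_eq P β
  have hu2 : Polynomial.eval β u ≠ 0 :=
    Polynomial.eval_divByMonic_pow_rootMultiplicity_ne_zero β hPne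
  set Qhat := ∏ l ∈ Finset.univ.erase j, (1 - Polynomial.C (y l) * Polynomial.X) with hQhat
  have hQfac : (∏ k, (1 - Polynomial.C (y k) * Polynomial.X))
      = (Polynomial.C (-(y j)) * (Polynomial.X - Polynomial.C β)) * Qhat := by
    rw [← Finset.mul_prod_erase Finset.univ _ (Finset.mem_univ j), ← hQhat]
    congr 1
    have h1 : -(y j) * β = -1 := by rw [neg_mul, hyβ]
    rw [mul_sub, ← Polynomial.C_mul, h1, map_neg, map_neg, map_one, sub_neg_eq_add]
    ring
  have hd : Polynomial.derivative P
      = Polynomial.C (m:ℂ) * (Polynomial.X - Polynomial.C β)^(m-1) * u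
        + (Polynomial.X - Polynomial.C β)^m * Polynomial.derivative u := by
    rw [← hu1, Polynomial.derivative_mul, Polynomial.derivative_pow,
      Polynomial.derivative_X_sub_C, mul_one]
  have hkey : (Polynomial.X - Polynomial.C β) *
      (Polynomial.C (m:ℂ) * (Polynomial.X - Polynomial.C β)^(m-1))
      = Polynomial.C (m:ℂ) * (Polynomial.X - Polynomial.C β)^m := by
    cases m with
    | zero => simp
    | succ k => rw [pow_succ]; push_cast; ring
  rw [hQfac, hd, ← hu1] at hpoly
  have E : (Polynomial.X - Polynomial.C β)^m *
      (Polynomial.C (-(y j)) * Qhat * (Polynomial.X * (Polynomial.C (m:ℂ) * u)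
        + (Polynomial.X - Polynomial.C β) *
          (Polynomial.X * Polynomial.derivative u - Polynomial.C Sc * u))
       + (∑ k, Polynomial.C (μ k) *
          ∏ l ∈ Finset.univ.erase k, (1 - Polynomial.C (y l) * Polynomial.X)) * u) = 0 := by
    linear_combination hpoly - (Polynomial.C (-(y j)) * Qhat * Polynomial.X * u) * hkey
  have hD : (Polynomial.X - Polynomial.C β)^m ≠ 0 :=
    pow_ne_zero _ (Polynomial.X_sub_C_ne_zero β)
  have E2 := (mul_eq_zero.1 E).resolve_left hD
  have hQhatβne : Polynomial.eval β Qhat ≠ 0 := by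
    rw [hQhat, Polynomial.eval_prod]
    rw [Finset.prod_ne_zero_iff]
    intro k hk h0
    simp only [Polynomial.eval_sub, Polynomial.eval_one, Polynomial.eval_mul,
      Polynomial.eval_C, Polynomial.eval_X] at h0
    have hβne : β ≠ 0 := inv_ne_zero hyj
    have hyk : y k = y j := by
      have h2 : y k * β = 1 := by linear_combination -h0
      have := h2.trans hyβ.symm
      exact mul_right_cancel₀ hβne this
    exact (Finset.mem_erase.1 hk).1 (hy hyk)
  have hReval : Polynomial.eval β (∑ k, Polynomial.C (μ k) *
      ∏ l ∈ Finset.univ.erase k, (1 - Polynomial.C (y l) * Polynomial.X))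
      = μ j * Polynomial.eval β Qhat := by
    rw [Polynomial.eval_finset_sum]
    rw [Finset.sum_eq_single j]
    · simp [hQhat]
    · intro k _ hkj
      rw [Polynomial.eval_mul]
      rw [Polynomial.eval_prod]
      rw [Finset.prod_eq_zero (Finset.mem_erase.2 ⟨hkj.symm, Finset.mem_univ j⟩)]
      · ring
      · simp [hyβ]
    · simp
  have E3 := congrArg (Polynomial.eval β) E2
  simp only [Polynomial.eval_add, Polynomial.eval_mul, Polynomial.eval_sub, Polynomial.eval_X,
    Polynomial.eval_C, Polynomial.eval_one, Polynomial.eval_zero, hReval, sub_self, zero_mul, mul_zero,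
    add_zero] at E3
  have hfin : (μ j - (m:ℂ)) * (Polynomial.eval β Qhat * Polynomial.eval β u) = 0 := by
    linear_combination E3 + ((m:ℂ) * Polynomial.eval β Qhat * Polynomial.eval β u) * hyβ
  have := (mul_eq_zero.1 hfin).resolve_right (mul_ne_zero hQhatβne hu2)
  exact sub_eq_zero.1 this

lemma coe_linsum {p : ℕ} (y μ : Fin p → ℂ) :
    ((∑ j, Polynomial.C (μ j) *
        ∏ k ∈ Finset.univ.erase j, (1 - Polynomial.C (y k) * Polynomial.X) : Polynomial ℂ) : ℂ⟦X⟧)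
      = ∑ j, C (μ j) * ∏ k ∈ Finset.univ.erase j, ((1:ℂ⟦X⟧) - C (y k) * X) := by
  rw [← Polynomial.coeToPowerSeries.ringHom_apply, map_sum]
  refine Finset.sum_congr rfl fun j _ => ?_
  rw [map_mul, map_prod]
  congr 1
  · simp [Polynomial.coeToPowerSeries.ringHom_apply]
  · exact Finset.prod_congr rfl fun k _ => by simp [Polynomial.coeToPowerSeries.ringHom_apply]

lemma coeff_zero_F {p : ℕ} (y μ : Fin p → ℂ) :
    PowerSeries.coeff 0 (∏ j, binSeries (μ j) (y j)) = 1 := by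
  rw [PowerSeries.coeff_zero_eq_constantCoeff_apply, map_prod]
  refine Finset.prod_eq_one fun j _ => ?_
  simp [binSeries, PowerSeries.constantCoeff_mk, gbinom]

/-- if `y_1, …, y_p` are distinct, `∑ μ_j = S ∈ ℤ`, `S > -p`, and
`Res_∞ a(z) z^i dz = 0` for `i = 0, …, p-2`, where `a(z) = ∏ (z - y_j)^{μ_j}`,
then `a` is a polynomial, i.e. all `μ_j` are non-negative integers. -/
theorem statement0 (p : ℕ) (hp : 0 < p) (y μ : Fin p → ℂ) (hy : Function.Injective y)
    (S : ℤ) (hS : (∑ j, μ j) = (S : ℂ)) (hSp : -(p : ℤ) < S)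
    (hres : ∀ i : ℕ, i + 1 < p → resInf (aExpansion y μ S i) = 0) :
    ∀ j, ∃ m : ℕ, μ j = (m : ℂ) := by
  classical
  have hres' : ∀ n : ℕ, S < (n:ℤ) → (n:ℤ) < S + p →
      PowerSeries.coeff n (∏ j, binSeries (μ j) (y j)) = 0 := by
    intro n h1 h2
    set i : ℕ := ((n:ℤ) - S - 1).toNat with hidef
    have hiz : (i:ℤ) = (n:ℤ) - S - 1 := Int.toNat_of_nonneg (by omega)
    have hip : i + 1 < p := by omega
    have hr := hres i hip
    unfold resInf aExpansion at hr
    have hco : (HahnSeries.single (-(S + (i:ℤ))) (1:ℂ) *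
          ((∏ j, binSeries (μ j) (y j) : PowerSeries ℂ) : LaurentSeries ℂ)).coeff 1
        = ((∏ j, binSeries (μ j) (y j) : PowerSeries ℂ) : LaurentSeries ℂ).coeff ((n:ℕ):ℤ) := by
      rw [show (1:ℤ) = ((n:ℕ):ℤ) + -(S + (i:ℤ)) by omega, HahnSeries.coeff_single_mul_add,
        one_mul]
    rw [hco, LaurentSeries.coeff_coe_powerSeries] at hr
    exact neg_eq_zero.1 hr
  have hA := stepA hp y μ S hS hSp hres'
  have hF0 : PowerSeries.coeff 0 (∏ j, binSeries (μ j) (y j)) = 1 := coeff_zero_F y μ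
  have hS0 : 0 ≤ S := by
    by_contra h
    push_neg at h
    have h0 := hA 0 (by exact_mod_cast by omega)
    rw [hF0] at h0
    exact one_ne_zero h0
  set N := S.toNat with hNdef
  have hN : (N:ℤ) = S := Int.toNat_of_nonneg hS0
  set P := PowerSeries.trunc (N+1) (∏ j, binSeries (μ j) (y j)) with hPdef
  have hPcoe : ((P : Polynomial ℂ) : ℂ⟦X⟧) = ∏ j, binSeries (μ j) (y j) := by
    ext d
    rw [Polynomial.coeff_coe, hPdef, PowerSeries.coeff_trunc]
    split_ifs with h
    · rfl
    · exact (hA d (by omega)).symm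
  have hPne : P ≠ 0 := by
    intro h
    rw [h] at hPcoe
    rw [← hPcoe] at hF0
    simp at hF0
  have master := masterODE y μ (Finset.univ : Finset (Fin p))
  rw [hS, ← hPcoe, ← coe_linprod, ← coe_linsum, derivativeFun_coe'] at master
  have hpoly : (∏ k, (1 - Polynomial.C (y k) * Polynomial.X)) *
      (Polynomial.X * Polynomial.derivative P - Polynomial.C ((S:ℤ):ℂ) * P)
      = (-(∑ k, Polynomial.C (μ k) *
          ∏ l ∈ Finset.univ.erase k, (1 - Polynomial.C (y l) * Polynomial.X))) * P := by
    rw [show (X : ℂ⟦X⟧) = ((Polynomial.X : Polynomial ℂ) : ℂ⟦X⟧) from (Polynomial.coe_X).symm,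
      show (C ((S:ℤ):ℂ)) = ((Polynomial.C ((S:ℤ):ℂ) : Polynomial ℂ) : ℂ⟦X⟧) from
        (Polynomial.coe_C _).symm] at master
    exact_mod_cast master
  intro j
  by_cases hyj : y j = 0
  · have hother : ∀ k, k ≠ j → y k ≠ 0 := fun k hk h0 => hk (hy (by rw [h0, hyj]))
    set mfun : Fin p → ℕ := fun k => Polynomial.rootMultiplicity (y k)⁻¹ P with hmfun
    have hμk : ∀ k ∈ Finset.univ.erase j, μ k = (mfun k : ℂ) := fun k hk =>
      stepB y μ hy _ P hPne hpoly k (hother k (Finset.mem_erase.1 hk).1)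
    have hdvd : (∏ k ∈ Finset.univ.erase j,
        (Polynomial.X - Polynomial.C ((y k)⁻¹)) ^ (mfun k)) ∣ P := by
      apply Finset.prod_dvd_of_coprime
      · intro a ha b hb hab
        exact (Polynomial.pairwise_coprime_X_sub_C
          (fun s t hst => hy (inv_injective hst)) hab).pow
      · intro k _
        exact Polynomial.pow_rootMultiplicity_dvd P _
    have hdegprod : (∏ k ∈ Finset.univ.erase j,
        (Polynomial.X - Polynomial.C ((y k)⁻¹)) ^ (mfun k)).natDegree
        = ∑ k ∈ Finset.univ.erase j, mfun k := by
      rw [Polynomial.natDegree_prod_of_monic _ _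
        (fun k _ => (Polynomial.monic_X_sub_C _).pow _)]
      exact Finset.sum_congr rfl fun k _ => by
        rw [(Polynomial.monic_X_sub_C _).natDegree_pow, Polynomial.natDegree_X_sub_C, mul_one]
    have hdegP : P.natDegree ≤ N :=
      Nat.lt_succ_iff.1 (PowerSeries.natDegree_trunc_lt (∏ j, binSeries (μ j) (y j)) N)
    have hle : ∑ k ∈ Finset.univ.erase j, mfun k ≤ N := by
      rw [← hdegprod]
      exact (Polynomial.natDegree_le_of_dvd hdvd hPne).trans hdegP
    refine ⟨N - ∑ k ∈ Finset.univ.erase j, mfun k, ?_⟩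
    have hsplit : μ j = ((S:ℤ):ℂ) - ∑ k ∈ Finset.univ.erase j, μ k := by
      rw [← hS, ← Finset.add_sum_erase Finset.univ μ (Finset.mem_univ j)]
      ring
    rw [hsplit, Finset.sum_congr rfl hμk, ← Nat.cast_sum, Nat.cast_sub hle]
    have hNS : ((N:ℕ):ℂ) = ((S:ℤ):ℂ) := by exact_mod_cast congrArg (fun t : ℤ => (t:ℂ)) hN
    rw [hNS]
  · exact ⟨_, stepB y μ hy _ P hPne hpoly j hyj⟩
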